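/- arXiv:2507.15829 — 4 statements merged into one kernel-verified Lean document; each statement's English description precedes it below -/
import Mathlib

section
/- Under the uniform connectivity assumption with constant λ > 0, if B ∈ ℝ^{N×N} is symmetric with B_{ij} ≥ r on edges and 0 otherwise, and the sources S^N ∈ ℝ^N_0 are given by S_i^N = ∫_{I_i^N} σ(x) dx for σ ∈ L^2_0([0,1]), then the unique zero-sum solution P of the Kirchhoff law −(1/N^2) ∑_j W^N_{ij} B_{ij} (P_j − P_i) = S_i^N satisfies ∑_{i,j} (P_i − P_j)^2 ≤ (8N^2/(rλ)^2) ∫_0^1 σ(x)^2 dx. -/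
open MeasureTheory Set Filter

noncomputable def μI : Measure ℝ := volume.restrict (Set.Icc 0 1)

/-!
Testing the Kirchhoff law against `P` gives `2N² ⟪S, P⟫ = ∑ᵢⱼ Wᵢⱼ Bᵢⱼ (Pᵢ − Pⱼ)²`, and since
`B ≥ r` on edges the connectivity assumption bounds this energy below by `rλN ‖P‖²`. Cauchy–Schwarz
on each cell `Iᵢᴺ` gives `‖S‖² ≤ N⁻¹ ∫ σ²`, so `rλN ‖P‖² ≤ 2N² ‖S‖ ‖P‖` bounds `‖P‖²`, and for a
zero-sum `P` one has `∑ᵢⱼ (Pᵢ − Pⱼ)² = 2N ‖P‖²`.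
-/

theorem sq_integral_le_measureReal_univ_mul {α : Type*} [MeasurableSpace α] {μ : Measure α}
    [IsFiniteMeasure μ] {f : α → ℝ} (hf : MemLp f 2 μ) :
    (∫ x, f x ∂μ) ^ 2 ≤ μ.real univ * ∫ x, f x ^ 2 ∂μ := by
  rcases eq_zero_or_neZero μ with rfl | hμ
  · simp
  have hjensen : (⨍ x, f x ∂μ) ^ 2 ≤ ⨍ x, f x ^ 2 ∂μ :=
    (even_two.convexOn_pow).map_average_le (continuous_pow 2).continuousOn isClosed_univ
      (by simp) (hf.integrable one_le_two) hf.integrable_sq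
  simp only [average_eq, smul_eq_mul, mul_pow] at hjensen
  have := mul_le_mul_of_nonneg_left hjensen (sq_nonneg (μ.real univ))
  field_simp at this
  linarith

theorem sq_setIntegral_Icc_le {f : ℝ → ℝ} {a b : ℝ} (hab : a ≤ b)
    (hf : MemLp f 2 (volume.restrict (Icc a b))) :
    (∫ x in Icc a b, f x) ^ 2 ≤ (b - a) * ∫ x in Icc a b, f x ^ 2 := by
  have : IsFiniteMeasure (volume.restrict (Icc a b)) :=
    isFiniteMeasure_restrict.2 measure_Icc_lt_top.ne
  simpa [Real.volume_real_Icc_of_le hab] using sq_integral_le_measureReal_univ_mul hf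

theorem sum_setIntegral_Icc_div_eq {N : ℕ} (hN : 0 < N) {f : ℝ → ℝ}
    (hf : IntegrableOn f (Icc 0 1)) :
    ∑ i : Fin N, ∫ x in Icc ((i : ℝ) / N) (((i : ℝ) + 1) / N), f x = ∫ x in Icc 0 1, f x := by
  set a : ℕ → ℝ := fun k => k / N
  have ha_mono : Monotone a := fun k l hkl => by simp only [a]; gcongr
  have hint : ∀ k < N, IntervalIntegrable f volume (a k) (a (k + 1)) := fun k hk => by
    refine (intervalIntegrable_iff_integrableOn_Icc_of_le (ha_mono k.le_succ)).2
      (hf.mono_set (Icc_subset_Icc (by positivity) ?_))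
    rw [div_le_one (by positivity)]
    exact_mod_cast hk
  have h0 : a 0 = 0 := by simp [a]
  have h1 : a N = 1 := div_self (by positivity)
  calc ∑ i : Fin N, ∫ x in Icc ((i : ℝ) / N) (((i : ℝ) + 1) / N), f x
      = ∑ k ∈ Finset.range N, ∫ x in a k..a (k + 1), f x := by
        rw [← Fin.sum_univ_eq_sum_range]
        refine Finset.sum_congr rfl fun i _ => ?_
        rw [intervalIntegral.integral_of_le (ha_mono i.val.le_succ),
          integral_Icc_eq_integral_Ioc]
        push_cast [a]
        rfl
    _ = ∫ x in Icc 0 1, f x := by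
        rw [intervalIntegral.sum_integral_adjacent_intervals hint, h0, h1,
          intervalIntegral.integral_of_le zero_le_one, integral_Icc_eq_integral_Ioc]

theorem sum_sq_setIntegral_Icc_div_le {N : ℕ} (hN : 0 < N) {f : ℝ → ℝ} (hf : MemLp f 2 μI) :
    ∑ i : Fin N, (∫ x in Icc ((i : ℝ) / N) (((i : ℝ) + 1) / N), f x) ^ 2
      ≤ (1 / N) * ∫ x, f x ^ 2 ∂μI := by
  calc ∑ i : Fin N, (∫ x in Icc ((i : ℝ) / N) (((i : ℝ) + 1) / N), f x) ^ 2
      ≤ ∑ i : Fin N, (1 / N) * ∫ x in Icc ((i : ℝ) / N) (((i : ℝ) + 1) / N), f x ^ 2 := by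
        refine Finset.sum_le_sum fun i _ => ?_
        have hsub : Icc ((i : ℝ) / N) (((i : ℝ) + 1) / N) ⊆ Icc 0 1 := by
          refine Icc_subset_Icc (by positivity) ?_
          rw [div_le_one (by positivity)]
          exact_mod_cast i.isLt
        have hfi : MemLp f 2 (volume.restrict (Icc ((i : ℝ) / N) (((i : ℝ) + 1) / N))) := by
          simpa [μI, Measure.restrict_restrict measurableSet_Icc, inter_eq_self_of_subset_left hsub]
            using hf.restrict (Icc ((i : ℝ) / N) (((i : ℝ) + 1) / N))
        have h := sq_setIntegral_Icc_le (by gcongr; linarith) hfi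
        rwa [show ((i : ℝ) + 1) / N - (i : ℝ) / N = 1 / N by ring] at h
    _ = (1 / N) * ∫ x, f x ^ 2 ∂μI := by
        rw [← Finset.mul_sum, sum_setIntegral_Icc_div_eq hN hf.integrable_sq]
        rfl

section Discrete

variable {ι : Type*} [Fintype ι]

theorem sum_sum_mul_sub_mul_self_eq (a : ι → ι → ℝ) (ha : ∀ i j, a i j = a j i) (z : ι → ℝ) :
    ∑ i, (∑ j, a i j * (z j - z i)) * z i = -(1 / 2) * ∑ i, ∑ j, a i j * (z i - z j) ^ 2 := by
  have hswap : ∑ i, ∑ j, a i j * (z j - z i) * z i = ∑ i, ∑ j, a i j * (z i - z j) * z j := by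
    rw [Finset.sum_comm]
    simp only [ha]
  have hsum : ∑ i, ∑ j, a i j * (z j - z i) * z i + ∑ i, ∑ j, a i j * (z i - z j) * z j
      = -∑ i, ∑ j, a i j * (z i - z j) ^ 2 := by
    simp only [← Finset.sum_add_distrib, ← Finset.sum_neg_distrib]
    congr! 2 with i - j -
    ring
  simp only [Finset.sum_mul] at hswap hsum ⊢
  linarith

theorem sum_sum_sub_sq_eq {z : ι → ℝ} (hz : ∑ i, z i = 0) :
    ∑ i, ∑ j, (z i - z j) ^ 2 = 2 * Fintype.card ι * ∑ i, z i ^ 2 := by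
  simp only [sub_sq, Finset.sum_add_distrib, Finset.sum_sub_distrib, Finset.sum_const,
    Finset.card_univ, nsmul_eq_mul, ← Finset.mul_sum, ← Finset.sum_mul, hz]
  ring

theorem mul_sum_sum_le_sum_sum_mul {W B : ι → ι → ℝ} {r : ℝ} (hW : ∀ i j, W i j = 0 ∨ W i j = 1)
    (hB : ∀ i j, W i j = 1 → r ≤ B i j) (z : ι → ℝ) :
    r * ∑ i, ∑ j, (z i - z j) ^ 2 * W i j ≤ ∑ i, ∑ j, W i j * B i j * (z i - z j) ^ 2 := by
  simp only [Finset.mul_sum]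
  refine Finset.sum_le_sum fun i _ => Finset.sum_le_sum fun j _ => ?_
  rcases hW i j with h | h
  · simp [h]
  · rw [h]
    nlinarith [hB i j h, sq_nonneg (z i - z j)]

end Discrete

theorem le_div_sq_of_mul_le_of_sq_le {a c d Q X : ℝ} (ha : 0 < a) (hd : 0 ≤ d) (hQ : 0 ≤ Q)
    (h₁ : a * Q ≤ c * X) (h₂ : X ^ 2 ≤ d * Q) : Q ≤ c ^ 2 * d / a ^ 2 := by
  rw [le_div_iff₀ (by positivity)]
  rcases hQ.eq_or_lt with rfl | hQ
  · simp only [zero_mul]; positivity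
  refine le_of_mul_le_mul_right ?_ hQ
  calc Q * a ^ 2 * Q = (a * Q) ^ 2 := by ring
    _ ≤ (c * X) ^ 2 := pow_le_pow_left₀ (by positivity) h₁ 2
    _ = c ^ 2 * X ^ 2 := by ring
    _ ≤ c ^ 2 * (d * Q) := by gcongr
    _ = c ^ 2 * d * Q := by ring

theorem kirchhoff_estimate_general (N : ℕ) (hN : 0 < N) (lam r : ℝ) (hlam : 0 < lam) (hr : 0 < r)
    (σ : ℝ → ℝ) (hσ : MemLp σ 2 μI)
    (W B : Fin N → Fin N → ℝ)
    (hW01 : ∀ i j, W i j = 0 ∨ W i j = 1)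
    (hWsym : ∀ i j, W i j = W j i)
    (hconn : ∀ z : Fin N → ℝ, (∑ i, z i) = 0 →
      lam * N * ∑ i, (z i) ^ 2 ≤ ∑ i, ∑ j, (z i - z j) ^ 2 * W i j)
    (hBsym : ∀ i j, B i j = B j i)
    (hBr : ∀ i j, W i j = 1 → r ≤ B i j)
    (P : Fin N → ℝ) (hPsum : ∑ i, P i = 0)
    (hK : ∀ i : Fin N, -(1 / (N : ℝ) ^ 2) * ∑ j, W i j * B i j * (P j - P i)
      = ∫ x in Set.Icc ((i.val : ℝ) / N) (((i.val : ℝ) + 1) / N), σ x) :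
    ∑ i, ∑ j, (P i - P j) ^ 2
      ≤ (8 * (N : ℝ) ^ 2 / (r * lam) ^ 2) * ∫ x, (σ x) ^ 2 ∂μI := by
  set S : Fin N → ℝ := fun i => ∫ x in Icc ((i.val : ℝ) / N) (((i.val : ℝ) + 1) / N), σ x
  set J := ∫ x, σ x ^ 2 ∂μI
  have hpairing : 2 * (N : ℝ) ^ 2 * ∑ i, S i * P i
      = ∑ i, ∑ j, W i j * B i j * (P i - P j) ^ 2 := by
    have hS : ∀ i, S i = -(1 / (N : ℝ) ^ 2) * ∑ j, W i j * B i j * (P j - P i) :=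
      fun i => (hK i).symm
    simp only [hS, mul_assoc (-(1 / (N : ℝ) ^ 2)), ← Finset.mul_sum]
    rw [sum_sum_mul_sub_mul_self_eq (fun i j => W i j * B i j) (fun i j => by rw [hWsym, hBsym]) P]
    field_simp
  have henergy : r * lam * N * ∑ i, P i ^ 2 ≤ 2 * (N : ℝ) ^ 2 * ∑ i, S i * P i := by
    rw [hpairing]
    linarith [mul_le_mul_of_nonneg_left (hconn P hPsum) hr.le,
      mul_sum_sum_le_sum_sum_mul hW01 hBr P]
  have hsources : (∑ i, S i * P i) ^ 2 ≤ (1 / N * J) * ∑ i, P i ^ 2 :=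
    (Finset.sum_mul_sq_le_sq_mul_sq _ S P).trans <| by
      gcongr
      exact sum_sq_setIntegral_Icc_div_le hN hσ
  have hJ : 0 ≤ J := integral_nonneg fun x => sq_nonneg (σ x)
  have hQ := le_div_sq_of_mul_le_of_sq_le (by positivity) (by positivity) (by positivity)
    henergy hsources
  rw [sum_sum_sub_sq_eq hPsum, Fintype.card_fin]
  calc 2 * (N : ℝ) * ∑ i, P i ^ 2
      ≤ 2 * N * ((2 * N ^ 2) ^ 2 * (1 / N * J) / (r * lam * N) ^ 2) := by gcongr
    _ = 8 * (N : ℝ) ^ 2 / (r * lam) ^ 2 * J := by field_simp; ring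

/-- Estimate on solutions of the Kirchhoff law: under the uniform connectivity assumption,
with `B ≥ r` on edges and `0` off edges, and sources `Sᵢ = ∫_{Iᵢᴺ} σ`, any zero-sum solution
`P` of the Kirchhoff law satisfies `∑ᵢⱼ (Pᵢ − Pⱼ)² ≤ (8N²/(rλ)²) ∫ σ²`. -/
theorem kirchhoff_estimate (N : ℕ) (hN : 0 < N) (lam r : ℝ) (hlam : 0 < lam) (hr : 0 < r)
    (σ : ℝ → ℝ) (hσ : MemLp σ 2 μI) (hσ0 : ∫ x, σ x ∂μI = 0)
    (W B : Fin N → Fin N → ℝ)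
    (hW01 : ∀ i j, W i j = 0 ∨ W i j = 1)
    (hWsym : ∀ i j, W i j = W j i)
    (hconn : ∀ z : Fin N → ℝ, (∑ i, z i) = 0 →
      lam * N * ∑ i, (z i) ^ 2 ≤ ∑ i, ∑ j, (z i - z j) ^ 2 * W i j)
    (hBsym : ∀ i j, B i j = B j i)
    (hBr : ∀ i j, W i j = 1 → r ≤ B i j)
    (hB0 : ∀ i j, W i j = 0 → B i j = 0)
    (P : Fin N → ℝ) (hPsum : ∑ i, P i = 0)
    (hK : ∀ i : Fin N, -(1 / (N : ℝ) ^ 2) * ∑ j, W i j * B i j * (P j - P i)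
      = ∫ x in Set.Icc ((i.val : ℝ) / N) (((i.val : ℝ) + 1) / N), σ x) :
    ∑ i, ∑ j, (P i - P j) ^ 2
      ≤ (8 * (N : ℝ) ^ 2 / (r * lam) ^ 2) * ∫ x, (σ x) ^ 2 ∂μI :=
  kirchhoff_estimate_general N hN lam r hlam hr σ hσ W B hW01 hWsym hconn hBsym hBr P hPsum hK
end

section
/- If for each N the pixel picture w^N of the adjacency matrix W^N satisfies the discrete Poincaré inequality ∬ (Z^N[z](x) − Z^N[z](y))^2 w^N(x,y) dx dy ≥ λ ∫ Z^N[z](x)^2 dx for all z ∈ L^2_0([0,1]) (which follows from the graph connectivity assumption), and w^N → w in L^1([0,1]^2) with w ∈ L^∞, then the limit graphon satisfies ∬ (z(x) − z(y))^2 w(x,y) dx dy ≥ λ ∫_0^1 z(x)^2 dx for all z ∈ L^2_0([0,1]). -/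
open MeasureTheory Set Filter

noncomputable def μsq : Measure (ℝ × ℝ) := μI.prod μI

/-- The grid cell `I_i^N` containing `x`, with clamped index. -/
def gridCell (N : ℕ) (x : ℝ) : Set ℝ :=
  Set.Icc (((min ⌊x * (N : ℝ)⌋.toNat (N - 1) : ℕ) : ℝ) / N)
    ((((min ⌊x * (N : ℝ)⌋.toNat (N - 1) : ℕ) : ℝ) + 1) / N)

/-- The projection `Z^N` onto piecewise constant functions on the intervals `I_i^N`. -/
noncomputable def ZN1 (N : ℕ) (u : ℝ → ℝ) (x : ℝ) : ℝ :=
  (N : ℝ) * ∫ s in gridCell N x, u s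

/-! The discrete inequality passes to the limit because both of its sides converge to the
corresponding sides of the continuous one. Since `Z^N z → z` in `L²`, Cauchy–Schwarz gives
`(Z^N z)² → z²` in `L¹`, both on `[0,1]` and, for the differences `z x - z y`, on `[0,1]²`.
The weights `w^N` are bounded by `1` and converge to `w` in `L¹`, hence in measure; this is
enough to pass to the limit in `∬ f w^N` for integrable `f`, and the error from replacing
`(Z^N z x - Z^N z y)²` by `(z x - z y)²` is at most its `L¹` distance. -/

open Topology

section L1Convergence

variable {α : Type*} [MeasurableSpace α] {μ : Measure α}

theorem abs_sq_sub_sq_le (a b : ℝ) : |a ^ 2 - b ^ 2| ≤ (a - b) ^ 2 + 2 * (|a - b| * |b|) :=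
  calc |a ^ 2 - b ^ 2| = |a - b| * |(a - b) + 2 * b| := by rw [← abs_mul]; ring_nf
    _ ≤ |a - b| * (|a - b| + 2 * |b|) := by
        gcongr
        exact (abs_add_le _ _).trans_eq (by rw [abs_mul, abs_two])
    _ = (a - b) ^ 2 + 2 * (|a - b| * |b|) := by rw [← sq_abs (a - b)]; ring

theorem integral_abs_mul_abs_le_sqrt_mul_sqrt {f g : α → ℝ} (hf : MemLp f 2 μ) (hg : MemLp g 2 μ) :
    ∫ x, |f x| * |g x| ∂μ ≤ √(∫ x, f x ^ 2 ∂μ) * √(∫ x, g x ^ 2 ∂μ) := by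
  have h := integral_mul_le_Lp_mul_Lq_of_nonneg Real.HolderConjugate.two_two
    (ae_of_all μ fun x => abs_nonneg (f x)) (ae_of_all μ fun x => abs_nonneg (g x))
    (by simpa using hf.norm) (by simpa using hg.norm)
  simpa [Real.sqrt_eq_rpow, Real.rpow_two, sq_abs] using h

theorem tendsto_integral_abs_sq_sub_sq {ι : Type*} {l : Filter ι} {g : ι → α → ℝ} {g₀ : α → ℝ}
    (hg : ∀ n, MemLp (g n) 2 μ) (hg₀ : MemLp g₀ 2 μ)
    (h : Tendsto (fun n => ∫ x, (g n x - g₀ x) ^ 2 ∂μ) l (𝓝 0)) :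
    Tendsto (fun n => ∫ x, |g n x ^ 2 - g₀ x ^ 2| ∂μ) l (𝓝 0) := by
  have bound : ∀ n, ∫ x, |g n x ^ 2 - g₀ x ^ 2| ∂μ ≤ ∫ x, (g n x - g₀ x) ^ 2 ∂μ
      + 2 * (√(∫ x, (g n x - g₀ x) ^ 2 ∂μ) * √(∫ x, g₀ x ^ 2 ∂μ)) := by
    intro n
    have hd : MemLp (fun x => g n x - g₀ x) 2 μ := (hg n).sub hg₀
    have hprod : Integrable (fun x => |g n x - g₀ x| * |g₀ x|) μ := hd.norm.integrable_mul hg₀.norm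
    calc ∫ x, |g n x ^ 2 - g₀ x ^ 2| ∂μ
        ≤ ∫ x, ((g n x - g₀ x) ^ 2 + 2 * (|g n x - g₀ x| * |g₀ x|)) ∂μ :=
          integral_mono_of_nonneg (ae_of_all μ fun x => abs_nonneg _)
            (hd.integrable_sq.add (hprod.const_mul 2))
            (ae_of_all μ fun x => abs_sq_sub_sq_le _ _)
      _ = ∫ x, (g n x - g₀ x) ^ 2 ∂μ + 2 * ∫ x, |g n x - g₀ x| * |g₀ x| ∂μ := by
          rw [integral_add hd.integrable_sq (hprod.const_mul 2), integral_const_mul]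
      _ ≤ _ := by gcongr; exact integral_abs_mul_abs_le_sqrt_mul_sqrt hd hg₀
  have hlim := h.add ((h.sqrt.mul_const √(∫ x, g₀ x ^ 2 ∂μ)).const_mul 2)
  simp only [Real.sqrt_zero, zero_mul, mul_zero, add_zero] at hlim
  exact squeeze_zero (fun n => integral_nonneg fun x => abs_nonneg _) bound hlim

theorem tendsto_integral_of_tendsto_integral_abs_sub {ι : Type*} {l : Filter ι}
    {F : ι → α → ℝ} {f : α → ℝ} (hF : ∀ n, Integrable (F n) μ) (hf : Integrable f μ)
    (h : Tendsto (fun n => ∫ x, |F n x - f x| ∂μ) l (𝓝 0)) :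
    Tendsto (fun n => ∫ x, F n x ∂μ) l (𝓝 (∫ x, f x ∂μ)) := by
  rw [tendsto_iff_norm_sub_tendsto_zero]
  refine squeeze_zero (fun n => norm_nonneg _) (fun n => ?_) h
  rw [← integral_sub (hF n) hf]
  exact norm_integral_le_integral_norm _

theorem tendsto_integral_mul_bdd_of_tendsto_integral_abs_sub {f : α → ℝ} (hf : Integrable f μ)
    {v : ℕ → α → ℝ} {v₀ : α → ℝ} {C : ℝ} (hv : ∀ n, Integrable (v n) μ) (hv₀ : Integrable v₀ μ)
    (hvC : ∀ n, ∀ᵐ x ∂μ, |v n x| ≤ C)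
    (h : Tendsto (fun n => ∫ x, |v n x - v₀ x| ∂μ) atTop (𝓝 0)) :
    Tendsto (fun n => ∫ x, f x * v n x ∂μ) atTop (𝓝 (∫ x, f x * v₀ x ∂μ)) := by
  have hmeas : TendstoInMeasure μ v atTop v₀ := by
    refine tendstoInMeasure_of_tendsto_eLpNorm one_ne_zero (fun n => (hv n).1) hv₀.1 ?_
    have hnorm : ∀ n, eLpNorm (v n - v₀) 1 μ = ENNReal.ofReal (∫ x, |v n x - v₀ x| ∂μ) := by
      intro n
      rw [eLpNorm_one_eq_lintegral_enorm,
        ← ofReal_integral_norm_eq_lintegral_enorm ((hv n).sub hv₀)]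
      rfl
    simpa [hnorm] using ENNReal.tendsto_ofReal h
  -- Every subsequence has a further one converging a.e., where dominated convergence applies.
  refine tendsto_of_subseq_tendsto fun ns hns => ?_
  obtain ⟨ms, -, hms⟩ := (hmeas.comp hns).exists_seq_tendsto_ae
  refine ⟨ms, tendsto_integral_of_dominated_convergence (fun x => C * |f x|)
    (fun n => hf.1.mul (hv _).1) (hf.abs.const_mul C) (fun n => ?_) ?_⟩
  · filter_upwards [hvC (ns (ms n))] with x hx
    rw [norm_mul, mul_comm]
    exact mul_le_mul_of_nonneg_right hx (abs_nonneg _)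
  · filter_upwards [hms] with x hx using hx.const_mul (f x)

theorem tendsto_integral_mul_of_tendsto_integral_abs_sub {F : ℕ → α → ℝ} {f : α → ℝ}
    (hF : ∀ n, Integrable (F n) μ) (hf : Integrable f μ)
    (hFf : Tendsto (fun n => ∫ x, |F n x - f x| ∂μ) atTop (𝓝 0))
    {v : ℕ → α → ℝ} {v₀ : α → ℝ} {C : ℝ} (hv : ∀ n, Integrable (v n) μ) (hv₀ : Integrable v₀ μ)
    (hvC : ∀ n, ∀ᵐ x ∂μ, |v n x| ≤ C)
    (hvv₀ : Tendsto (fun n => ∫ x, |v n x - v₀ x| ∂μ) atTop (𝓝 0)) :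
    Tendsto (fun n => ∫ x, F n x * v n x ∂μ) atTop (𝓝 (∫ x, f x * v₀ x ∂μ)) := by
  have hdiff : Tendsto (fun n => ∫ x, F n x * v n x ∂μ - ∫ x, f x * v n x ∂μ) atTop (𝓝 0) := by
    have hlim := hFf.const_mul C
    rw [mul_zero] at hlim
    refine squeeze_zero_norm (fun n => ?_) hlim
    rw [← integral_sub ((hF n).mul_bdd (hv n).1 (hvC n)) (hf.mul_bdd (hv n).1 (hvC n)),
      ← integral_const_mul]
    refine norm_integral_le_of_norm_le (((hF n).sub hf).abs.const_mul C) ?_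
    filter_upwards [hvC n] with x hx
    rw [← sub_mul, norm_mul, mul_comm]
    exact mul_le_mul_of_nonneg_right hx (abs_nonneg _)
  simpa using hdiff.add (tendsto_integral_mul_bdd_of_tendsto_integral_abs_sub hf hv hv₀ hvC hvv₀)

end L1Convergence

section Product

variable {α : Type*} [MeasurableSpace α] {μ : Measure α} [IsProbabilityMeasure μ]

theorem MeasureTheory.MemLp.sub_comp_fst_snd {g : α → ℝ} (hg : MemLp g 2 μ) :
    MemLp (fun q : α × α => g q.1 - g q.2) 2 (μ.prod μ) :=
  (hg.comp_fst μ).sub (hg.comp_snd μ)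

theorem integral_sub_comp_fst_snd_sq_le {g : α → ℝ} (hg : MemLp g 2 μ) :
    ∫ q, (g q.1 - g q.2) ^ 2 ∂μ.prod μ ≤ 4 * ∫ x, g x ^ 2 ∂μ := by
  have h₁ : Integrable (fun q : α × α => 2 * g q.1 ^ 2) (μ.prod μ) :=
    ((hg.comp_fst μ).integrable_sq).const_mul 2
  have h₂ : Integrable (fun q : α × α => 2 * g q.2 ^ 2) (μ.prod μ) :=
    ((hg.comp_snd μ).integrable_sq).const_mul 2
  calc ∫ q, (g q.1 - g q.2) ^ 2 ∂μ.prod μ ≤ ∫ q, (2 * g q.1 ^ 2 + 2 * g q.2 ^ 2) ∂μ.prod μ :=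
        integral_mono_of_nonneg (ae_of_all _ fun q => sq_nonneg _) (h₁.add h₂)
          (ae_of_all _ fun q => by nlinarith [sq_nonneg (g q.1 + g q.2)])
    _ = 4 * ∫ x, g x ^ 2 ∂μ := by
        rw [integral_add h₁ h₂, integral_const_mul, integral_const_mul,
          integral_fun_fst (fun x => g x ^ 2), integral_fun_snd (fun x => g x ^ 2)]
        simp only [probReal_univ, one_smul]
        ring

theorem tendsto_integral_sub_comp_fst_snd_sq {ι : Type*} {l : Filter ι} {g : ι → α → ℝ}
    {g₀ : α → ℝ} (hg : ∀ n, MemLp (g n) 2 μ) (hg₀ : MemLp g₀ 2 μ)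
    (h : Tendsto (fun n => ∫ x, (g n x - g₀ x) ^ 2 ∂μ) l (𝓝 0)) :
    Tendsto (fun n => ∫ q, ((g n q.1 - g n q.2) - (g₀ q.1 - g₀ q.2)) ^ 2 ∂μ.prod μ) l (𝓝 0) := by
  have hlim := h.const_mul 4
  rw [mul_zero] at hlim
  refine squeeze_zero (fun n => integral_nonneg fun q => sq_nonneg _) (fun n => ?_) hlim
  calc ∫ q, ((g n q.1 - g n q.2) - (g₀ q.1 - g₀ q.2)) ^ 2 ∂μ.prod μ
      = ∫ q, ((g n q.1 - g₀ q.1) - (g n q.2 - g₀ q.2)) ^ 2 ∂μ.prod μ := by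
        congr 1; ext q; ring
    _ ≤ 4 * ∫ x, (g n x - g₀ x) ^ 2 ∂μ :=
        integral_sub_comp_fst_snd_sq_le (g := fun x => g n x - g₀ x) ((hg n).sub hg₀)

end Product

instance : IsProbabilityMeasure μI := ⟨by simp [μI, Real.volume_Icc]⟩

instance : IsProbabilityMeasure μsq := by unfold μsq; infer_instance

theorem memLp_ZN1 (N : ℕ) (u : ℝ → ℝ) : MemLp (ZN1 N u) 2 μI := by
  set cellMean : ℕ → ℝ := fun j => (N : ℝ) * ∫ s in Icc ((j : ℝ) / N) ((j + 1) / N), u s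
  set cellIndex : ℝ → ℕ := fun x => min ⌊x * N⌋.toNat (N - 1)
  have hZ : ZN1 N u = cellMean ∘ cellIndex := rfl
  have hIndex : Measurable cellIndex :=
    (measurable_from_top (f := fun n : ℤ => min n.toNat (N - 1))).comp
      (Int.measurable_floor.comp (measurable_id.mul_const _))
  refine MemLp.of_bound (hZ ▸ (measurable_from_top.comp hIndex).aestronglyMeasurable)
    (∑ j ∈ Finset.Iic (N - 1), |cellMean j|) (ae_of_all _ fun x => ?_)
  rw [hZ]
  exact Finset.single_le_sum (f := fun j => |cellMean j|) (fun j _ => abs_nonneg _)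
    (Finset.mem_Iic.2 (min_le_right _ _))

theorem graphon_spectral_gap_limit_general (lam : ℝ)
    (wseq : ℕ → ℝ × ℝ → ℝ) (w : ℝ × ℝ → ℝ)
    (hwseqm : ∀ N, Measurable (wseq N)) (hwm : Measurable w)
    (hw01 : ∀ N z, wseq N z = 0 ∨ wseq N z = 1)
    (hdisc : ∀ N : ℕ, ∀ z : ℝ → ℝ, MemLp z 2 μI → (∫ x, z x ∂μI) = 0 →
      lam * ∫ x, (ZN1 N z x) ^ 2 ∂μI
        ≤ ∫ q, (ZN1 N z q.1 - ZN1 N z q.2) ^ 2 * wseq N q ∂μsq)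
    (hL1conv : Tendsto (fun N => ∫ q, |wseq N q - w q| ∂μsq) atTop (nhds 0))
    (hwbd : ∃ M, ∀ q, |w q| ≤ M)
    (hZconv : ∀ z : ℝ → ℝ, MemLp z 2 μI →
      Tendsto (fun N => ∫ x, (ZN1 N z x - z x) ^ 2 ∂μI) atTop (nhds 0)) :
    ∀ z : ℝ → ℝ, MemLp z 2 μI → (∫ x, z x ∂μI) = 0 →
      lam * ∫ x, (z x) ^ 2 ∂μI ≤ ∫ q, (z q.1 - z q.2) ^ 2 * w q ∂μsq := by
  intro z hz hz0
  obtain ⟨M, hM⟩ := hwbd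
  have hw : Integrable w μsq := Integrable.of_bound hwm.aestronglyMeasurable M (ae_of_all _ hM)
  have hwseq_le : ∀ N q, |wseq N q| ≤ 1 := fun N q => by rcases hw01 N q with h | h <;> simp [h]
  have hwseq : ∀ N, Integrable (wseq N) μsq := fun N =>
    Integrable.of_bound (hwseqm N).aestronglyMeasurable 1 (ae_of_all _ (hwseq_le N))
  have hZ : ∀ N, MemLp (ZN1 N z) 2 μI := fun N => memLp_ZN1 N z
  have hnorm : Tendsto (fun N => lam * ∫ x, ZN1 N z x ^ 2 ∂μI) atTop
      (𝓝 (lam * ∫ x, z x ^ 2 ∂μI)) :=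
    (tendsto_integral_of_tendsto_integral_abs_sub (fun N => (hZ N).integrable_sq)
      hz.integrable_sq (tendsto_integral_abs_sq_sub_sq hZ hz (hZconv z hz))).const_mul lam
  have henergy : Tendsto (fun N => ∫ q, (ZN1 N z q.1 - ZN1 N z q.2) ^ 2 * wseq N q ∂μsq) atTop
      (𝓝 (∫ q, (z q.1 - z q.2) ^ 2 * w q ∂μsq)) :=
    tendsto_integral_mul_of_tendsto_integral_abs_sub
      (fun N => (hZ N).sub_comp_fst_snd.integrable_sq) hz.sub_comp_fst_snd.integrable_sq
      (tendsto_integral_abs_sq_sub_sq (fun N => (hZ N).sub_comp_fst_snd) hz.sub_comp_fst_snd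
        (tendsto_integral_sub_comp_fst_snd_sq hZ hz (hZconv z hz)))
      hwseq hw (fun N => ae_of_all _ (hwseq_le N)) hL1conv
  exact le_of_tendsto_of_tendsto' hnorm henergy fun N => hdisc N z hz hz0

/-- Passage to the limit in the discrete Poincaré inequality: if the pixel pictures `wⁿ`
(0-1 valued) satisfy the discrete spectral gap inequality for projected functions, and
`wⁿ → w` in `L¹([0,1]²)` with `w` bounded, then the limit graphon `w` satisfies
`∬ (z(x) − z(y))² w ≥ λ ∫ z²` for all zero-mean `z ∈ L²`. -/
theorem graphon_spectral_gap_limit (lam : ℝ) (hlam : 0 < lam)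
    (wseq : ℕ → ℝ × ℝ → ℝ) (w : ℝ × ℝ → ℝ)
    (hwseqm : ∀ N, Measurable (wseq N)) (hwm : Measurable w)
    (hw01 : ∀ N z, wseq N z = 0 ∨ wseq N z = 1)
    (hdisc : ∀ N : ℕ, ∀ z : ℝ → ℝ, MemLp z 2 μI → (∫ x, z x ∂μI) = 0 →
      lam * ∫ x, (ZN1 N z x) ^ 2 ∂μI
        ≤ ∫ q, (ZN1 N z q.1 - ZN1 N z q.2) ^ 2 * wseq N q ∂μsq)
    (hL1conv : Tendsto (fun N => ∫ q, |wseq N q - w q| ∂μsq) atTop (nhds 0))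
    (hwbd : ∃ M, ∀ q, |w q| ≤ M)
    (hZconv : ∀ z : ℝ → ℝ, MemLp z 2 μI →
      Tendsto (fun N => ∫ x, (ZN1 N z x - z x) ^ 2 ∂μI) atTop (nhds 0)) :
    ∀ z : ℝ → ℝ, MemLp z 2 μI → (∫ x, z x ∂μI) = 0 →
      lam * ∫ x, (z x) ^ 2 ∂μI ≤ ∫ q, (z q.1 - z q.2) ^ 2 * w q ∂μsq :=
  graphon_spectral_gap_limit_general lam wseq w hwseqm hwm hw01 hdisc hL1conv hwbd hZconv
end

section
/- For every N and every symmetric matrix B with B_{ij} ≥ r on edges of G^N and 0 otherwise, the semi-discrete energy functional evaluated at the pixel function Q^N[B] equals the rescaled discrete energy: F^N_scaled[B] = (1/(2N^2)) ∑_{i,j} (B_{ij}(P_j−P_i)^2 + (ν/γ) B_{ij}^γ (L^N_{ij})^{γ+1}) W^N_{ij}, where P solves the discrete Kirchhoff law; i.e., 𝓕^N[Q^N[B]] = F^N[B]. -/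
open MeasureTheory Set Filter

/-- The two-dimensional projection `Z^N` onto piecewise constant functions
on the patches `I_i^N × I_j^N`. -/
noncomputable def ZN2 (N : ℕ) (u : ℝ × ℝ → ℝ) (z : ℝ × ℝ) : ℝ :=
  (N : ℝ) ^ 2 * ∫ s in (gridCell N z.1) ×ˢ (gridCell N z.2), u s

/-- Index of the grid cell containing `x` (clamped to `Fin N`). -/
noncomputable def gridIdxF (N : ℕ) (hN : 0 < N) (x : ℝ) : Fin N :=
  ⟨min ⌊x * (N : ℝ)⌋.toNat (N - 1), by omega⟩

/-- Pixel picture `Q^N` of a matrix. -/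
noncomputable def pixM (N : ℕ) (hN : 0 < N) (B : Fin N → Fin N → ℝ) : ℝ × ℝ → ℝ :=
  fun z => B (gridIdxF N hN z.1) (gridIdxF N hN z.2)

/-- Pixelation `Q^N` of a vector. -/
noncomputable def pixV (N : ℕ) (hN : 0 < N) (P : Fin N → ℝ) : ℝ → ℝ :=
  fun x => P (gridIdxF N hN x)

/-!
Every integrand in sight is constant on the pixels `I_i × I_j`, so both integrals are `1 / N²`
times the corresponding sums. Testing the semi-discrete equation with a piecewise constant `Φ`
and summing the Kirchhoff law against `Φ` shows that the pixel values `Q` of `p^N` and `P` satisfy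
`E(Q, Φ) = E(P, Φ)` for every zero-mean `Φ`, where `E` is the Dirichlet form with conductances
`W i j * B i j`. As `E` does not see constants, this gives `E(Q, Q) = E(P, P)`.
-/

def gridIco (N : ℕ) (i : Fin N) : Set ℝ :=
  Ico ((i : ℝ) / N) (((i : ℝ) + 1) / N)

lemma gridIdxF_eq_of_mem_gridIco {N : ℕ} (hN : 0 < N) {i : Fin N} {x : ℝ}
    (hx : x ∈ gridIco N i) : gridIdxF N hN x = i := by
  have hN' : (0 : ℝ) < N := by exact_mod_cast hN
  have hfloor : ⌊x * N⌋ = i := by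
    rw [Int.floor_eq_iff, Int.cast_natCast, ← div_le_iff₀ hN', ← lt_div_iff₀ hN']
    exact hx
  ext
  simp only [gridIdxF, hfloor, Int.toNat_natCast]
  omega

lemma iUnion_gridIco {N : ℕ} (hN : 0 < N) : ⋃ i : Fin N, gridIco N i = Ico 0 1 := by
  have hN' : (0 : ℝ) < N := by exact_mod_cast hN
  ext x
  simp only [mem_iUnion, gridIco, mem_Ico, div_le_iff₀ hN', lt_div_iff₀ hN']
  constructor
  · rintro ⟨i, hi, hx⟩
    have : (i : ℝ) + 1 ≤ N := by exact_mod_cast i.isLt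
    constructor <;> nlinarith [(i : ℕ).cast_nonneg (α := ℝ)]
  · rintro ⟨h0, h1⟩
    have hxN : 0 ≤ x * N := by positivity
    refine ⟨⟨⌊x * N⌋₊, ?_⟩, Nat.floor_le hxN, Nat.lt_floor_add_one _⟩
    exact (Nat.floor_lt hxN).2 (by nlinarith)

lemma pairwise_disjoint_gridIco (N : ℕ) : Pairwise (Function.onFun Disjoint (gridIco N)) := by
  intro i j hij
  wlog h : i < j generalizing i j
  · exact (this hij.symm ((Ne.symm hij).lt_of_le (not_lt.1 h))).symm
  have hij : ((i : ℝ) + 1) / N ≤ (j : ℝ) / N := by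
    gcongr
    exact_mod_cast h
  exact disjoint_left.2 fun x hi hj => (hi.2.trans_le hij).not_ge hj.1

lemma volume_gridIco (N : ℕ) (i : Fin N) : volume (gridIco N i) = ENNReal.ofReal (1 / N) := by
  rw [gridIco, Real.volume_Ico, ← sub_div, add_sub_cancel_left]

instance : IsFiniteMeasure μI := by
  rw [μI]
  infer_instance

lemma μI_eq_sum_restrict_gridIco {N : ℕ} (hN : 0 < N) :
    μI = ∑ i : Fin N, volume.restrict (gridIco N i) := by
  rw [μI, ← Measure.restrict_congr_set Ico_ae_eq_Icc, ← iUnion_gridIco hN,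
    Measure.restrict_iUnion (s := gridIco N) (pairwise_disjoint_gridIco N)
      fun _ => measurableSet_Ico, Measure.sum_fintype]

lemma μsq_eq_sum_restrict_gridIco {N : ℕ} (hN : 0 < N) :
    μsq = ∑ p : Fin N × Fin N,
      (volume.prod volume).restrict (gridIco N p.1 ×ˢ gridIco N p.2) := by
  simp_rw [μsq, μI_eq_sum_restrict_gridIco hN, ← Measure.sum_fintype, Measure.prod_sum,
    Measure.prod_restrict]

lemma ae_restrict_gridIco_gridIdxF_eq {N : ℕ} (hN : 0 < N) (i : Fin N) :
    ∀ᵐ x ∂volume.restrict (gridIco N i), gridIdxF N hN x = i :=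
  (ae_restrict_mem measurableSet_Ico).mono fun _ hx => gridIdxF_eq_of_mem_gridIco hN hx

lemma integral_mul_pixV {N : ℕ} (hN : 0 < N) {σ : ℝ → ℝ} (hσ : Integrable σ μI)
    (g : Fin N → ℝ) :
    ∫ x, σ x * pixV N hN g x ∂μI
      = ∑ i, g i * ∫ x in Icc ((i : ℝ) / N) (((i : ℝ) + 1) / N), σ x := by
  rw [μI_eq_sum_restrict_gridIco hN, integrable_finsetSum_measure] at hσ
  have hae : ∀ i, (fun x => σ x * pixV N hN g x)
      =ᵐ[volume.restrict (gridIco N i)] fun x => g i * σ x :=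
    fun i => (ae_restrict_gridIco_gridIdxF_eq hN i).mono fun x hx => by
      simp only [pixV, hx, mul_comm]
  rw [μI_eq_sum_restrict_gridIco hN,
    integral_finsetSum_measure fun i hi => ((hσ i hi).const_mul (g i)).congr (hae i).symm]
  refine Finset.sum_congr rfl fun i _ => ?_
  rw [integral_congr_ae (hae i), integral_const_mul, gridIco, integral_Icc_eq_integral_Ico]

lemma integral_comp_gridIdxF_prod {N : ℕ} (hN : 0 < N) (f : Fin N → Fin N → ℝ) :
    ∫ z, f (gridIdxF N hN z.1) (gridIdxF N hN z.2) ∂μsq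
      = 1 / (N : ℝ) ^ 2 * ∑ i, ∑ j, f i j := by
  have hae : ∀ p : Fin N × Fin N,
      (fun z : ℝ × ℝ => f (gridIdxF N hN z.1) (gridIdxF N hN z.2))
      =ᵐ[(volume.prod volume).restrict (gridIco N p.1 ×ˢ gridIco N p.2)] fun _ => f p.1 p.2 :=
    fun p => (ae_restrict_mem (measurableSet_Ico.prod measurableSet_Ico)).mono fun z hz => by
      simp only [gridIdxF_eq_of_mem_gridIco hN hz.1, gridIdxF_eq_of_mem_gridIco hN hz.2]
  have hvol : ∀ p : Fin N × Fin N,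
      (volume.prod volume).real (gridIco N p.1 ×ˢ gridIco N p.2) = 1 / (N : ℝ) ^ 2 := by
    intro p
    rw [measureReal_def, Measure.prod_prod, volume_gridIco, volume_gridIco,
      ← ENNReal.ofReal_mul (by positivity), ENNReal.toReal_ofReal (by positivity)]
    ring
  have hint : ∀ p : Fin N × Fin N, IntegrableOn (fun _ => f p.1 p.2)
      (gridIco N p.1 ×ˢ gridIco N p.2) (volume.prod volume) := fun p =>
    integrableOn_const (by simp [Measure.prod_prod, volume_gridIco, ENNReal.mul_eq_top])
  rw [μsq_eq_sum_restrict_gridIco hN,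
    integral_finsetSum_measure fun p _ => (hint p).congr (hae p).symm, Fintype.sum_prod_type]
  simp only [Finset.mul_sum]
  refine Finset.sum_congr rfl fun i _ => Finset.sum_congr rfl fun j _ => ?_
  rw [integral_congr_ae (hae (i, j)), integral_const, smul_eq_mul, measureReal_restrict_apply_univ,
    hvol]

section DirichletForm

variable {ι : Type*} [Fintype ι]

def dirichletForm (A : ι → ι → ℝ) (u v : ι → ℝ) : ℝ :=
  ∑ i, ∑ j, A i j * (u i - u j) * (v i - v j)

lemma dirichletForm_eq_two_mul_sum {A : ι → ι → ℝ} (hA : ∀ i j, A i j = A j i)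
    (u v : ι → ℝ) :
    dirichletForm A u v = 2 * ∑ i, v i * ∑ j, A i j * (u i - u j) := by
  have hswap : ∑ i, ∑ j, A i j * (u i - u j) * v j
      = -∑ i, ∑ j, A i j * (u i - u j) * v i := by
    rw [Finset.sum_comm, ← Finset.sum_neg_distrib]
    refine Finset.sum_congr rfl fun i _ => ?_
    rw [← Finset.sum_neg_distrib]
    refine Finset.sum_congr rfl fun j _ => ?_
    rw [hA]
    ring
  calc dirichletForm A u v
      = ∑ i, ∑ j, A i j * (u i - u j) * v i - ∑ i, ∑ j, A i j * (u i - u j) * v j := by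
        simp only [dirichletForm, mul_sub, Finset.sum_sub_distrib]
    _ = 2 * ∑ i, v i * ∑ j, A i j * (u i - u j) := by
        rw [hswap, sub_neg_eq_add, ← two_mul]
        congr 1
        refine Finset.sum_congr rfl fun i _ => ?_
        rw [Finset.mul_sum]
        exact Finset.sum_congr rfl fun j _ => by ring

lemma sum_mul_eq_dirichletForm_of_kirchhoff {A : ι → ι → ℝ} (hA : ∀ i j, A i j = A j i)
    {c : ℝ} {P S : ι → ℝ} (hK : ∀ i, -c * ∑ j, A i j * (P j - P i) = S i)
    (φ : ι → ℝ) :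
    ∑ i, φ i * S i = c / 2 * dirichletForm A P φ := by
  have hS : ∀ i, S i = c * ∑ j, A i j * (P i - P j) := fun i => by
    rw [← hK i, neg_mul, ← mul_neg, ← Finset.sum_neg_distrib]
    simp only [← mul_neg, neg_sub]
  rw [dirichletForm_eq_two_mul_sum hA, ← mul_assoc, div_mul_cancel₀ c two_ne_zero,
    Finset.mul_sum]
  refine Finset.sum_congr rfl fun i _ => ?_
  rw [hS]
  ring

lemma dirichletForm_self_eq_of_forall_sum_eq_zero {A : ι → ι → ℝ} {u w : ι → ℝ}
    (h : ∀ φ : ι → ℝ, ∑ i, φ i = 0 → dirichletForm A u φ = dirichletForm A w φ) :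
    dirichletForm A u u = dirichletForm A w w := by
  set c := (∑ i, (u i + w i)) / Fintype.card ι
  have hsum : ∑ i, (u i + w i - c) = 0 := by
    rw [Finset.sum_sub_distrib, Finset.sum_const, Finset.card_univ, nsmul_eq_mul,
      mul_div_cancel_of_imp' fun h => by simp [Fintype.card_eq_zero_iff.1 (by exact_mod_cast h)],
      sub_self]
  -- `E(u,u) - E(w,w) = E(u - w, u + w)`, and `u + w - c` has the same increments as `u + w`.
  have hpolar : dirichletForm A u u - dirichletForm A w w
      = dirichletForm A u (fun i => u i + w i - c)
        - dirichletForm A w (fun i => u i + w i - c) := by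
    simp only [dirichletForm, ← Finset.sum_sub_distrib]
    refine Finset.sum_congr rfl fun i _ => Finset.sum_congr rfl fun j _ => ?_
    ring
  linarith [h _ hsum]

end DirichletForm

lemma integral_pixM_mul_pixV_sub_mul_pixV_sub {N : ℕ} (hN : 0 < N) (B W : Fin N → Fin N → ℝ)
    (u v : Fin N → ℝ) :
    ∫ z, pixM N hN B z * (pixV N hN u z.1 - pixV N hN u z.2)
        * (pixV N hN v z.1 - pixV N hN v z.2) * pixM N hN W z ∂μsq
      = 1 / (N : ℝ) ^ 2 * dirichletForm (fun i j => W i j * B i j) u v := by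
  rw [dirichletForm, ← integral_comp_gridIdxF_prod hN]
  exact integral_congr_ae (Eventually.of_forall fun z => by simp only [pixM, pixV]; ring)

lemma integral_pixM_mul_pixV_sub_sq {N : ℕ} (hN : 0 < N) (B W : Fin N → Fin N → ℝ)
    (u : Fin N → ℝ) :
    ∫ z, pixM N hN B z * (pixV N hN u z.1 - pixV N hN u z.2) ^ 2 * pixM N hN W z ∂μsq
      = 1 / (N : ℝ) ^ 2 * dirichletForm (fun i j => W i j * B i j) u u := by
  rw [← integral_pixM_mul_pixV_sub_mul_pixV_sub hN]
  congr with z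
  ring

theorem semidiscrete_equals_discrete_energy_general (N : ℕ) (hN : 0 < N)
    (γ ν : ℝ)
    (σ : ℝ → ℝ) (hσ : MemLp σ 2 μI)
    (W B L : Fin N → Fin N → ℝ)
    (hWsym : ∀ i j, W i j = W j i)
    (hBsym : ∀ i j, B i j = B j i)
    (P : Fin N → ℝ)
    (hK : ∀ i : Fin N, -(1 / (N : ℝ) ^ 2) * ∑ j, W i j * B i j * (P j - P i)
      = ∫ x in Set.Icc ((i.val : ℝ) / N) (((i.val : ℝ) + 1) / N), σ x)
    (pN : ℝ → ℝ) (hpNpc : ∃ Q : Fin N → ℝ, pN = pixV N hN Q)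
    (hpNsol : ∀ Φ : Fin N → ℝ, (∑ i, Φ i = 0) →
      (1 / 2) * ∫ z, pixM N hN B z * (pN z.1 - pN z.2)
          * (pixV N hN Φ z.1 - pixV N hN Φ z.2) * pixM N hN W z ∂μsq
        = ∫ x, σ x * pixV N hN Φ x ∂μI) :
    (1 / 2) * ∫ z, pixM N hN B z * (pN z.1 - pN z.2) ^ 2 * pixM N hN W z ∂μsq
      + (ν / (2 * γ)) * ∫ z, pixM N hN B z ^ γ * pixM N hN L z ^ (γ + 1)
          * pixM N hN W z ∂μsq
      = (1 / (2 * (N : ℝ) ^ 2)) * ∑ i, ∑ j,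
          (B i j * (P j - P i) ^ 2 + (ν / γ) * B i j ^ γ * L i j ^ (γ + 1)) * W i j := by
  obtain ⟨Q, rfl⟩ := hpNpc
  have hWB : ∀ i j, W i j * B i j = W j i * B j i := fun i j => by rw [hWsym, hBsym]
  have hweak : ∀ Φ : Fin N → ℝ, ∑ i, Φ i = 0 →
      dirichletForm (fun i j => W i j * B i j) Q Φ
        = dirichletForm (fun i j => W i j * B i j) P Φ := by
    intro Φ hΦ
    have h := hpNsol Φ hΦ
    rw [integral_pixM_mul_pixV_sub_mul_pixV_sub,
      integral_mul_pixV hN (hσ.integrable one_le_two),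
      sum_mul_eq_dirichletForm_of_kirchhoff hWB hK] at h
    have hN2 : (N : ℝ) ^ 2 ≠ 0 := by positivity
    field_simp at h
    exact h
  have henergy := dirichletForm_self_eq_of_forall_sum_eq_zero hweak
  have hcost : ∫ z, pixM N hN B z ^ γ * pixM N hN L z ^ (γ + 1) * pixM N hN W z ∂μsq
      = 1 / (N : ℝ) ^ 2 * ∑ i, ∑ j, B i j ^ γ * L i j ^ (γ + 1) * W i j :=
    integral_comp_gridIdxF_prod hN fun i j => B i j ^ γ * L i j ^ (γ + 1) * W i j
  rw [integral_pixM_mul_pixV_sub_sq, henergy, hcost]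
  simp only [dirichletForm, Finset.mul_sum, ← Finset.sum_add_distrib]
  refine Finset.sum_congr rfl fun i _ => Finset.sum_congr rfl fun j _ => ?_
  ring

/-- Reformulation of the discrete energy: for admissible conductivity matrices `B`,
the semi-discrete energy functional evaluated at the pixel function `Q^N[B]`,
with `p^N` the semi-discrete Poisson solution, equals the rescaled discrete energy
`F^N[B]` computed from the discrete Kirchhoff solution `P`. -/
theorem semidiscrete_equals_discrete_energy (N : ℕ) (hN : 0 < N)
    (γ ν r lam : ℝ) (hγ : 1 < γ) (hν : 0 < ν) (hr : 0 < r) (hlam : 0 < lam)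
    (σ : ℝ → ℝ) (hσ : MemLp σ 2 μI) (hσ0 : ∫ x, σ x ∂μI = 0)
    (W B L : Fin N → Fin N → ℝ)
    (hW01 : ∀ i j, W i j = 0 ∨ W i j = 1) (hWsym : ∀ i j, W i j = W j i)
    (hconn : ∀ z : Fin N → ℝ, (∑ i, z i) = 0 →
      lam * N * ∑ i, (z i) ^ 2 ≤ ∑ i, ∑ j, (z i - z j) ^ 2 * W i j)
    (hLsym : ∀ i j, L i j = L j i) (hLpos : ∀ i j, 0 < L i j) (hL1 : ∀ i j, L i j ≤ 1)
    (hBsym : ∀ i j, B i j = B j i)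
    (hBr : ∀ i j, W i j = 1 → r ≤ B i j) (hB0 : ∀ i j, W i j = 0 → B i j = 0)
    (P : Fin N → ℝ) (hPsum : ∑ i, P i = 0)
    (hK : ∀ i : Fin N, -(1 / (N : ℝ) ^ 2) * ∑ j, W i j * B i j * (P j - P i)
      = ∫ x in Set.Icc ((i.val : ℝ) / N) (((i.val : ℝ) + 1) / N), σ x)
    (pN : ℝ → ℝ) (hpNpc : ∃ Q : Fin N → ℝ, pN = pixV N hN Q)
    (hpN0 : ∫ x, pN x ∂μI = 0)
    (hpNsol : ∀ Φ : Fin N → ℝ, (∑ i, Φ i = 0) →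
      (1 / 2) * ∫ z, pixM N hN B z * (pN z.1 - pN z.2)
          * (pixV N hN Φ z.1 - pixV N hN Φ z.2) * pixM N hN W z ∂μsq
        = ∫ x, σ x * pixV N hN Φ x ∂μI) :
    (1 / 2) * ∫ z, pixM N hN B z * (pN z.1 - pN z.2) ^ 2 * pixM N hN W z ∂μsq
      + (ν / (2 * γ)) * ∫ z, pixM N hN B z ^ γ * pixM N hN L z ^ (γ + 1)
          * pixM N hN W z ∂μsq
      = (1 / (2 * (N : ℝ) ^ 2)) * ∑ i, ∑ j,
          (B i j * (P j - P i) ^ 2 + (ν / γ) * B i j ^ γ * L i j ^ (γ + 1)) * W i j :=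
  semidiscrete_equals_discrete_energy_general N hN γ ν σ hσ W B L hWsym hBsym P hK pN hpNpc hpNsol
end

section
/- The kinetic energy functional 𝓕_kin[b] = ∫σ p[b] dx, where p[b] is the solution of the nonlocal Poisson equation with kernel b, is convex on the convex set of symmetric L^2 kernels bounded below by r > 0: for b_0, b_1 in this set and t ∈ [0,1], 𝓕_kin[(1−t)b_0 + t b_1] ≤ (1−t)𝓕_kin[b_0] + t 𝓕_kin[b_1]. -/
open MeasureTheory Set Filter

/-!
By the weak formulation tested with `z`, the nonnegative quantity `½ ∬ b (𝔡z - 𝔡p[b])² w` equals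
`∫ σ p[b] - (2 ∫ σ z - ½ ∬ b (𝔡z)² w)`, so `∫ σ p[b]` is the supremum over `z` of expressions
affine in `b`. Taking `z = p_t` for the kernels `b₀` and `b₁`, weighting by `1 - t` and `t`, and
using `∫ σ p_t = ½ ∬ b_t (𝔡p_t)² w` gives convexity.

The weak formulation only admits bounded test functions. It is extended to `z` of finite energy
through the truncations `clamp n z`: by dominated convergence once both energies are known to be
finite, and, for the finiteness of the energy of `p[b]` itself, by Fatou's lemma applied to the
nonnegative integrands `b (𝔡p) (𝔡 clamp n p) w`.
-/

open Topology

instance inst_s13 : IsProbabilityMeasure μI := ⟨by simp [μI]⟩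

noncomputable def clamp (n : ℕ) (s : ℝ) : ℝ := max (-n) (min n s)

theorem lipschitzWith_clamp (n : ℕ) : LipschitzWith 1 (clamp n) :=
  (LipschitzWith.id.const_min _).const_max _

theorem continuous_clamp (n : ℕ) : Continuous (clamp n) :=
  (lipschitzWith_clamp n).continuous

theorem monotone_clamp (n : ℕ) : Monotone (clamp n) :=
  monotone_const.max (monotone_const.min monotone_id)

theorem clamp_zero (n : ℕ) : clamp n 0 = 0 := by
  simp [clamp]

theorem abs_clamp_sub_clamp_le (n : ℕ) (a b : ℝ) : |clamp n a - clamp n b| ≤ |a - b| := by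
  simpa [Real.dist_eq] using (lipschitzWith_clamp n).dist_le_mul a b

theorem abs_clamp_le (n : ℕ) (s : ℝ) : |clamp n s| ≤ |s| := by
  simpa [clamp_zero] using abs_clamp_sub_clamp_le n s 0

theorem abs_clamp_le_natCast (n : ℕ) (s : ℝ) : |clamp n s| ≤ n :=
  abs_le.2 ⟨le_max_left _ _, max_le (by simp) (min_le_left _ _)⟩

theorem clamp_of_abs_le {n : ℕ} {s : ℝ} (h : |s| ≤ n) : clamp n s = s := by
  rw [abs_le] at h
  rw [clamp, min_eq_right h.2, max_eq_right h.1]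

theorem tendsto_clamp (s : ℝ) : Tendsto (fun n : ℕ => clamp n s) atTop (𝓝 s) := by
  refine tendsto_const_nhds.congr' ?_
  filter_upwards [eventually_ge_atTop ⌈|s|⌉₊] with n hn
  exact (clamp_of_abs_le ((Nat.le_ceil _).trans (Nat.cast_le.2 hn))).symm

theorem Monotone.sub_mul_sub_nonneg {R : Type*} [Ring R] [LinearOrder R] [IsOrderedRing R]
    {f : R → R} (hf : Monotone f) (a b : R) : 0 ≤ (a - b) * (f a - f b) := by
  rcases le_total a b with h | h
  · exact mul_nonneg_of_nonpos_of_nonpos (sub_nonpos.2 h) (sub_nonpos.2 (hf h))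
  · exact mul_nonneg (sub_nonneg.2 h) (sub_nonneg.2 (hf h))

theorem norm_mul_mul_mul_le {b w x y d : ℝ} (hb : 0 ≤ b) (hw : 0 ≤ w) (hd : |d| ≤ |y|) :
    ‖b * x * d * w‖ ≤ (1 / 2) * (b * x ^ 2 * w + b * y ^ 2 * w) := by
  have hbw : 0 ≤ b * w := mul_nonneg hb hw
  have hxd : |x| * |d| ≤ (x ^ 2 + y ^ 2) / 2 := by
    nlinarith [mul_le_mul_of_nonneg_left hd (abs_nonneg x), sq_abs x, sq_abs y,
      sq_nonneg (|x| - |y|)]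
  calc ‖b * x * d * w‖ = b * w * (|x| * |d|) := by
        rw [Real.norm_eq_abs, abs_mul, abs_mul, abs_mul, abs_of_nonneg hb, abs_of_nonneg hw]
        ring
    _ ≤ b * w * ((x ^ 2 + y ^ 2) / 2) := mul_le_mul_of_nonneg_left hxd hbw
    _ = (1 / 2) * (b * x ^ 2 * w + b * y ^ 2 * w) := by ring

section

variable {α : Type*} [MeasurableSpace α] {μ : Measure α}

theorem integrable_of_tendsto_integral_of_nonneg {G : ℕ → α → ℝ} {f : α → ℝ} {L : ℝ}
    (hG : ∀ n, Integrable (G n) μ) (hG0 : ∀ n, 0 ≤ᵐ[μ] G n)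
    (hGf : ∀ᵐ x ∂μ, Tendsto (fun n => G n x) atTop (𝓝 (f x)))
    (hL : Tendsto (fun n => ∫ x, G n x ∂μ) atTop (𝓝 L)) :
    Integrable f μ := by
  refine ⟨aestronglyMeasurable_of_tendsto_ae _ (fun n => (hG n).1) hGf, ?_⟩
  have hlint : ∀ n, ∫⁻ x, ‖G n x‖ₑ ∂μ = ENNReal.ofReal (∫ x, G n x ∂μ) := by
    intro n
    rw [ofReal_integral_eq_lintegral_ofReal (hG n) (hG0 n)]
    refine lintegral_congr_ae ?_
    filter_upwards [hG0 n] with x hx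
    rw [Real.enorm_eq_ofReal hx]
  have hliminf : liminf (fun n => ∫⁻ x, ‖G n x‖ₑ ∂μ) atTop = ENNReal.ofReal L := by
    simp only [hlint]
    exact ((ENNReal.continuous_ofReal.tendsto _).comp hL).liminf_eq
  calc ∫⁻ x, ‖f x‖ₑ ∂μ = ∫⁻ x, liminf (fun n => ‖G n x‖ₑ) atTop ∂μ :=
        lintegral_congr_ae (by filter_upwards [hGf] with x hx using hx.enorm.liminf_eq.symm)
    _ ≤ liminf (fun n => ∫⁻ x, ‖G n x‖ₑ ∂μ) atTop :=
        lintegral_liminf_le' fun n => (hG n).1.aemeasurable.enorm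
    _ < ⊤ := hliminf ▸ ENNReal.ofReal_lt_top

theorem MeasureTheory.AEStronglyMeasurable.fst_sub_snd {f : α → ℝ}
    (hf : AEStronglyMeasurable f μ) :
    AEStronglyMeasurable (fun q : α × α => f q.1 - f q.2) (μ.prod μ) :=
  hf.comp_fst.sub hf.comp_snd

theorem MeasureTheory.MemLp.fst_sub_snd [IsFiniteMeasure μ] {f : α → ℝ} {p : ENNReal}
    (hf : MemLp f p μ) :
    MemLp (fun q : α × α => f q.1 - f q.2) p (μ.prod μ) :=
  (hf.comp_fst μ).sub (hf.comp_snd μ)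

theorem tendsto_integral_mul_clamp {σ z : α → ℝ} (hσ : MemLp σ 2 μ) (hz : MemLp z 2 μ) :
    Tendsto (fun n : ℕ => ∫ x, σ x * clamp n (z x) ∂μ) atTop
      (𝓝 (∫ x, σ x * z x ∂μ)) := by
  refine tendsto_integral_of_dominated_convergence (fun x => ‖σ x‖ * ‖z x‖)
    (fun n => hσ.1.mul ((continuous_clamp n).comp_aestronglyMeasurable hz.1))
    (hσ.norm.integrable_mul hz.norm) (fun n => ae_of_all _ fun x => ?_)
    (ae_of_all _ fun x => tendsto_const_nhds.mul (tendsto_clamp (z x)))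
  rw [norm_mul]
  exact mul_le_mul_of_nonneg_left (abs_clamp_le n (z x)) (norm_nonneg _)

theorem integrable_mul_mul_mul_of_integrable_sq {b w u v : α → ℝ}
    (hb : 0 ≤ᵐ[μ] b) (hw : 0 ≤ᵐ[μ] w)
    (hm : AEStronglyMeasurable (fun x => b x * u x * v x * w x) μ)
    (hu : Integrable (fun x => b x * u x ^ 2 * w x) μ)
    (hv : Integrable (fun x => b x * v x ^ 2 * w x) μ) :
    Integrable (fun x => b x * u x * v x * w x) μ :=
  ((hu.add hv).const_mul (1 / 2)).mono' hm <| by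
    filter_upwards [hb, hw] with x hbx hwx using norm_mul_mul_mul_le hbx hwx le_rfl

theorem energy_ae_nonneg {b w u : α → ℝ} (hb : 0 ≤ᵐ[μ] b) (hw : 0 ≤ᵐ[μ] w) :
    0 ≤ᵐ[μ] fun x => b x * u x ^ 2 * w x := by
  filter_upwards [hb, hw] with x hbx hwx
  exact mul_nonneg (mul_nonneg hbx (sq_nonneg _)) hwx

end

def IsWeakSolution {α : Type*} [MeasurableSpace α] (μ : Measure α) (σ : α → ℝ)
    (w b : α × α → ℝ) (p : α → ℝ) : Prop :=
  ∀ φ : α → ℝ, MemLp φ ⊤ μ → (∫ x, φ x ∂μ) = 0 →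
    (1 / 2) * ∫ q, b q * (p q.1 - p q.2) * (φ q.1 - φ q.2) * w q ∂μ.prod μ
      = ∫ x, σ x * φ x ∂μ

namespace IsWeakSolution

variable {α : Type*} [MeasurableSpace α] {μ : Measure α} [IsProbabilityMeasure μ]
  {σ : α → ℝ} {w b : α × α → ℝ} {p : α → ℝ}

theorem eq_of_memLp_top (hp : IsWeakSolution μ σ w b p) (hσ : Integrable σ μ)
    (hσ0 : ∫ x, σ x ∂μ = 0) {φ : α → ℝ} (hφ : MemLp φ ⊤ μ) :
    (1 / 2) * ∫ q, b q * (p q.1 - p q.2) * (φ q.1 - φ q.2) * w q ∂μ.prod μ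
      = ∫ x, σ x * φ x ∂μ := by
  set c := ∫ x, φ x ∂μ
  have h := hp (fun x => φ x - c) (hφ.sub (memLp_const c)) <| by
    rw [integral_sub (hφ.integrable le_top) (integrable_const c)]
    simp [c]
  simp only [sub_sub_sub_cancel_right] at h
  have hσφ : Integrable (fun x => σ x * φ x) μ := hσ.mul_of_top_left hφ
  simp_rw [h, mul_sub]
  rw [integral_sub hσφ (hσ.mul_const c),
    integral_mul_const, hσ0, zero_mul, sub_zero]

theorem integral_cross_eq (hp : IsWeakSolution μ σ w b p) (hσ : MemLp σ 2 μ)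
    (hσ0 : ∫ x, σ x ∂μ = 0) (hb : AEStronglyMeasurable b (μ.prod μ))
    (hb_nonneg : 0 ≤ᵐ[μ.prod μ] b) (hw : AEStronglyMeasurable w (μ.prod μ))
    (hw_nonneg : 0 ≤ᵐ[μ.prod μ] w) (hpm : AEStronglyMeasurable p μ) {z : α → ℝ}
    (hz : MemLp z 2 μ)
    (hEp : Integrable (fun q => b q * (p q.1 - p q.2) ^ 2 * w q) (μ.prod μ))
    (hEz : Integrable (fun q => b q * (z q.1 - z q.2) ^ 2 * w q) (μ.prod μ)) :
    (1 / 2) * ∫ q, b q * (p q.1 - p q.2) * (z q.1 - z q.2) * w q ∂μ.prod μ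
      = ∫ x, σ x * z x ∂μ := by
  have hclamp : ∀ n : ℕ, MemLp (fun x => clamp n (z x)) ⊤ μ := fun n =>
    memLp_top_of_bound ((continuous_clamp n).comp_aestronglyMeasurable hz.1) n
      (ae_of_all _ fun x => abs_clamp_le_natCast n (z x))
  have hlhs : Tendsto
      (fun n : ℕ => ∫ q, b q * (p q.1 - p q.2) * (clamp n (z q.1) - clamp n (z q.2)) * w q
        ∂μ.prod μ)
      atTop (𝓝 (∫ q, b q * (p q.1 - p q.2) * (z q.1 - z q.2) * w q ∂μ.prod μ)) :=
    tendsto_integral_of_dominated_convergence _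
      (fun n => ((hb.mul hpm.fst_sub_snd).mul (hclamp n).1.fst_sub_snd).mul hw)
      ((hEp.add hEz).const_mul (1 / 2))
      (fun n => by
        filter_upwards [hb_nonneg, hw_nonneg] with q hbq hwq
        exact norm_mul_mul_mul_le hbq hwq (abs_clamp_sub_clamp_le n _ _))
      (ae_of_all _ fun q => (tendsto_const_nhds.mul
        ((tendsto_clamp _).sub (tendsto_clamp _))).mul tendsto_const_nhds)
  have hrhs : Tendsto
      (fun n : ℕ => ∫ q, b q * (p q.1 - p q.2) * (clamp n (z q.1) - clamp n (z q.2)) * w q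
        ∂μ.prod μ)
      atTop (𝓝 (2 * ∫ x, σ x * z x ∂μ)) := by
    refine ((tendsto_integral_mul_clamp hσ hz).const_mul 2).congr fun n => ?_
    linarith [hp.eq_of_memLp_top (hσ.integrable one_le_two) hσ0 (hclamp n)]
  rw [tendsto_nhds_unique hlhs hrhs]
  ring

theorem integrable_energy (hp : IsWeakSolution μ σ w b p) (hσ : MemLp σ 2 μ)
    (hσ0 : ∫ x, σ x ∂μ = 0) (hb : MemLp b 2 (μ.prod μ))
    (hb_nonneg : 0 ≤ᵐ[μ.prod μ] b)
    (hw : MemLp w ⊤ (μ.prod μ)) (hw_nonneg : 0 ≤ᵐ[μ.prod μ] w) (hpL2 : MemLp p 2 μ) :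
    Integrable (fun q => b q * (p q.1 - p q.2) ^ 2 * w q) (μ.prod μ) := by
  have hclamp : ∀ n : ℕ, MemLp (fun x => clamp n (p x)) ⊤ μ := fun n =>
    memLp_top_of_bound ((continuous_clamp n).comp_aestronglyMeasurable hpL2.1) n
      (ae_of_all _ fun x => abs_clamp_le_natCast n (p x))
  refine integrable_of_tendsto_integral_of_nonneg
    (G := fun n q => b q * (p q.1 - p q.2) * (clamp n (p q.1) - clamp n (p q.2)) * w q)
    (L := 2 * ∫ x, σ x * p x ∂μ) (fun n => ?_) (fun n => ?_) (ae_of_all _ fun q => ?_) ?_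
  · have h := (hb.integrable_mul hpL2.fst_sub_snd).mul_of_top_left
      (((hclamp n).fst_sub_snd).mul hw)
    exact h.congr (ae_of_all _ fun q => by simp only [Pi.mul_apply]; ring)
  · filter_upwards [hb_nonneg, hw_nonneg] with q hbq hwq
    rw [mul_assoc (b q)]
    exact mul_nonneg (mul_nonneg hbq ((monotone_clamp n).sub_mul_sub_nonneg _ _)) hwq
  · convert (tendsto_const_nhds.mul ((tendsto_clamp _).sub (tendsto_clamp _))).mul
      tendsto_const_nhds using 2
    ring
  · refine ((tendsto_integral_mul_clamp hσ hpL2).const_mul 2).congr fun n => ?_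
    linarith [hp.eq_of_memLp_top (hσ.integrable one_le_two) hσ0 (hclamp n)]

theorem energy_eq (hp : IsWeakSolution μ σ w b p) (hσ : MemLp σ 2 μ)
    (hσ0 : ∫ x, σ x ∂μ = 0) (hb : MemLp b 2 (μ.prod μ))
    (hb_nonneg : 0 ≤ᵐ[μ.prod μ] b)
    (hw : MemLp w ⊤ (μ.prod μ)) (hw_nonneg : 0 ≤ᵐ[μ.prod μ] w) (hpL2 : MemLp p 2 μ) :
    (1 / 2) * ∫ q, b q * (p q.1 - p q.2) ^ 2 * w q ∂μ.prod μ = ∫ x, σ x * p x ∂μ := by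
  have hE := hp.integrable_energy hσ hσ0 hb hb_nonneg hw hw_nonneg hpL2
  rw [← hp.integral_cross_eq hσ hσ0 hb.1 hb_nonneg hw.1 hw_nonneg hpL2.1 hpL2 hE hE]
  simp only [mul_assoc, ← sq]

theorem two_mul_integral_sub_energy_le (hp : IsWeakSolution μ σ w b p) (hσ : MemLp σ 2 μ)
    (hσ0 : ∫ x, σ x ∂μ = 0) (hb : MemLp b 2 (μ.prod μ))
    (hb_nonneg : 0 ≤ᵐ[μ.prod μ] b)
    (hw : MemLp w ⊤ (μ.prod μ)) (hw_nonneg : 0 ≤ᵐ[μ.prod μ] w) (hpL2 : MemLp p 2 μ)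
    {z : α → ℝ} (hz : MemLp z 2 μ)
    (hEz : Integrable (fun q => b q * (z q.1 - z q.2) ^ 2 * w q) (μ.prod μ)) :
    2 * ∫ x, σ x * z x ∂μ - (1 / 2) * ∫ q, b q * (z q.1 - z q.2) ^ 2 * w q ∂μ.prod μ
      ≤ ∫ x, σ x * p x ∂μ := by
  have hEp := hp.integrable_energy hσ hσ0 hb hb_nonneg hw hw_nonneg hpL2
  have hcross := integrable_mul_mul_mul_of_integrable_sq hb_nonneg hw_nonneg
    (((hb.1.mul hpL2.1.fst_sub_snd).mul hz.1.fst_sub_snd).mul hw.1) hEp hEz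
  have hgap : 0 ≤ ∫ q, b q * ((z q.1 - z q.2) - (p q.1 - p q.2)) ^ 2 * w q ∂μ.prod μ :=
    integral_nonneg_of_ae (energy_ae_nonneg hb_nonneg hw_nonneg)
  have hexpand : ∫ q, b q * ((z q.1 - z q.2) - (p q.1 - p q.2)) ^ 2 * w q ∂μ.prod μ
      = ∫ q, b q * (z q.1 - z q.2) ^ 2 * w q ∂μ.prod μ
        - 2 * ∫ q, b q * (p q.1 - p q.2) * (z q.1 - z q.2) * w q ∂μ.prod μ
        + ∫ q, b q * (p q.1 - p q.2) ^ 2 * w q ∂μ.prod μ := by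
    have hdiff : Integrable (fun q => b q * (z q.1 - z q.2) ^ 2 * w q
        - 2 * (b q * (p q.1 - p q.2) * (z q.1 - z q.2) * w q)) (μ.prod μ) :=
      hEz.sub (hcross.const_mul 2)
    rw [← integral_const_mul, ← integral_sub hEz (hcross.const_mul 2),
      ← integral_add hdiff hEp]
    exact integral_congr_ae (ae_of_all _ fun q => by ring)
  have hcross_eq := hp.integral_cross_eq hσ hσ0 hb.1 hb_nonneg hw.1 hw_nonneg hpL2.1 hz hEp hEz
  have henergy := hp.energy_eq hσ hσ0 hb hb_nonneg hw hw_nonneg hpL2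
  linarith

/-- The weight `c` sits inside the energy integral, so that for `c = 0` the energy of `z` need not
be finite. -/
theorem mul_two_mul_integral_sub_energy_le (hp : IsWeakSolution μ σ w b p)
    (hσ : MemLp σ 2 μ) (hσ0 : ∫ x, σ x ∂μ = 0) (hb : MemLp b 2 (μ.prod μ))
    (hb_nonneg : 0 ≤ᵐ[μ.prod μ] b) (hw : MemLp w ⊤ (μ.prod μ))
    (hw_nonneg : 0 ≤ᵐ[μ.prod μ] w)
    (hpL2 : MemLp p 2 μ) {z : α → ℝ} (hz : MemLp z 2 μ) {c : ℝ} (hc : 0 ≤ c)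
    (hEz : Integrable (fun q => c * (b q * (z q.1 - z q.2) ^ 2 * w q)) (μ.prod μ)) :
    c * (2 * ∫ x, σ x * z x ∂μ)
        - (1 / 2) * ∫ q, c * (b q * (z q.1 - z q.2) ^ 2 * w q) ∂μ.prod μ
      ≤ c * ∫ x, σ x * p x ∂μ := by
  rcases hc.eq_or_lt with rfl | hc
  · simp
  have hEz' : Integrable (fun q => b q * (z q.1 - z q.2) ^ 2 * w q) (μ.prod μ) := by
    simpa [inv_mul_cancel_left₀ hc.ne'] using hEz.const_mul c⁻¹
  have h := mul_le_mul_of_nonneg_left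
    (hp.two_mul_integral_sub_energy_le hσ hσ0 hb hb_nonneg hw hw_nonneg hpL2 hz hEz') hc.le
  rw [integral_const_mul]
  linarith

theorem integral_mul_le_convex_comb {b0 b1 : α × α → ℝ} {p0 p1 pt : α → ℝ} {t : ℝ}
    (ht0 : 0 ≤ t) (ht1 : t ≤ 1)
    (hsol0 : IsWeakSolution μ σ w b0 p0) (hsol1 : IsWeakSolution μ σ w b1 p1)
    (hsolt : IsWeakSolution μ σ w (fun q => (1 - t) * b0 q + t * b1 q) pt)
    (hσ : MemLp σ 2 μ) (hσ0 : ∫ x, σ x ∂μ = 0)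
    (hb0 : MemLp b0 2 (μ.prod μ)) (hb0_nonneg : 0 ≤ᵐ[μ.prod μ] b0)
    (hb1 : MemLp b1 2 (μ.prod μ)) (hb1_nonneg : 0 ≤ᵐ[μ.prod μ] b1)
    (hw : MemLp w ⊤ (μ.prod μ)) (hw_nonneg : 0 ≤ᵐ[μ.prod μ] w)
    (hp0 : MemLp p0 2 μ) (hp1 : MemLp p1 2 μ) (hpt : MemLp pt 2 μ) :
    ∫ x, σ x * pt x ∂μ
      ≤ (1 - t) * ∫ x, σ x * p0 x ∂μ + t * ∫ x, σ x * p1 x ∂μ := by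
  have hbt_nonneg : 0 ≤ᵐ[μ.prod μ] fun q => (1 - t) * b0 q + t * b1 q := by
    filter_upwards [hb0_nonneg, hb1_nonneg] with q h0 h1
    exact add_nonneg (mul_nonneg (sub_nonneg.2 ht1) h0) (mul_nonneg ht0 h1)
  have hbt := (hb0.const_mul (1 - t)).add (hb1.const_mul t)
  have hsplit : (fun q => ((1 - t) * b0 q + t * b1 q) * (pt q.1 - pt q.2) ^ 2 * w q)
      = (fun q => (1 - t) * (b0 q * (pt q.1 - pt q.2) ^ 2 * w q))
        + fun q => t * (b1 q * (pt q.1 - pt q.2) ^ 2 * w q) := by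
    ext q
    simp only [Pi.add_apply]
    ring
  have hEt := hsolt.integrable_energy hσ hσ0 hbt hbt_nonneg hw hw_nonneg hpt
  rw [hsplit] at hEt
  obtain ⟨hE0, hE1⟩ := (integrable_add_iff_of_nonneg
    (f := fun q => (1 - t) * (b0 q * (pt q.1 - pt q.2) ^ 2 * w q))
    (((hb0.1.mul (hpt.fst_sub_snd.1.pow 2)).mul hw.1).const_mul _)
    ((energy_ae_nonneg hb0_nonneg hw_nonneg).mono fun _ h => mul_nonneg (sub_nonneg.2 ht1) h)
    ((energy_ae_nonneg hb1_nonneg hw_nonneg).mono fun _ h => mul_nonneg ht0 h)).1 hEt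
  have henergy := hsolt.energy_eq hσ hσ0 hbt hbt_nonneg hw hw_nonneg hpt
  rw [hsplit, integral_add' hE0 hE1] at henergy
  linarith [hsol0.mul_two_mul_integral_sub_energy_le hσ hσ0 hb0 hb0_nonneg hw hw_nonneg hp0 hpt
      (sub_nonneg.2 ht1) hE0,
    hsol1.mul_two_mul_integral_sub_energy_le hσ hσ0 hb1 hb1_nonneg hw hw_nonneg hp1 hpt ht0 hE1]

end IsWeakSolution

theorem kinetic_energy_convex_general (r : ℝ) (hr : 0 < r)
    (σ : ℝ → ℝ) (hσ : MemLp σ 2 μI) (hσ0 : ∫ x, σ x ∂μI = 0)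
    (w : ℝ × ℝ → ℝ) (hw0 : ∀ z, 0 ≤ w z) (hwb : MemLp w ⊤ μsq)
    (b0 b1 : ℝ × ℝ → ℝ)
    (hb0 : MemLp b0 2 μsq)
    (hb0r : ∀ᵐ z ∂μsq, r ≤ b0 z)
    (hb1 : MemLp b1 2 μsq)
    (hb1r : ∀ᵐ z ∂μsq, r ≤ b1 z)
    (t : ℝ) (ht0 : 0 ≤ t) (ht1 : t ≤ 1)
    (p0 p1 pt : ℝ → ℝ)
    (hp0 : MemLp p0 2 μI)
    (hp0sol : ∀ φ : ℝ → ℝ, MemLp φ ⊤ μI → (∫ x, φ x ∂μI) = 0 →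
      (1 / 2) * ∫ q, b0 q * (p0 q.1 - p0 q.2) * (φ q.1 - φ q.2) * w q ∂μsq
        = ∫ x, σ x * φ x ∂μI)
    (hp1 : MemLp p1 2 μI)
    (hp1sol : ∀ φ : ℝ → ℝ, MemLp φ ⊤ μI → (∫ x, φ x ∂μI) = 0 →
      (1 / 2) * ∫ q, b1 q * (p1 q.1 - p1 q.2) * (φ q.1 - φ q.2) * w q ∂μsq
        = ∫ x, σ x * φ x ∂μI)
    (hpt : MemLp pt 2 μI)
    (hptsol : ∀ φ : ℝ → ℝ, MemLp φ ⊤ μI → (∫ x, φ x ∂μI) = 0 →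
      (1 / 2) * ∫ q, ((1 - t) * b0 q + t * b1 q) * (pt q.1 - pt q.2) * (φ q.1 - φ q.2)
          * w q ∂μsq
        = ∫ x, σ x * φ x ∂μI) :
    ∫ x, σ x * pt x ∂μI
      ≤ (1 - t) * ∫ x, σ x * p0 x ∂μI + t * ∫ x, σ x * p1 x ∂μI :=
  IsWeakSolution.integral_mul_le_convex_comb ht0 ht1 hp0sol hp1sol hptsol hσ hσ0
    hb0 (hb0r.mono fun _ h => hr.le.trans h) hb1 (hb1r.mono fun _ h => hr.le.trans h)
    hwb (ae_of_all _ hw0) hp0 hp1 hpt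

/-- Convexity of the kinetic energy functional `b ↦ 𝓕_kin[b] = ∫ σ p[b]` on the convex set
of symmetric `L²` kernels bounded below by `r > 0`: for kernels `b₀, b₁` with solutions
`p₀, p₁`, and `p_t` the solution for `(1−t)b₀ + t b₁`, one has
`∫ σ p_t ≤ (1−t) ∫ σ p₀ + t ∫ σ p₁`. -/
theorem kinetic_energy_convex (r lam : ℝ) (hr : 0 < r) (hlam : 0 < lam)
    (σ : ℝ → ℝ) (hσ : MemLp σ 2 μI) (hσ0 : ∫ x, σ x ∂μI = 0)
    (w : ℝ × ℝ → ℝ) (hwm : Measurable w) (hw0 : ∀ z, 0 ≤ w z) (hwb : MemLp w ⊤ μsq)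
    (hgap : ∀ z : ℝ → ℝ, MemLp z 2 μI → (∫ x, z x ∂μI) = 0 →
      lam * ∫ x, (z x) ^ 2 ∂μI ≤ ∫ q, (z q.1 - z q.2) ^ 2 * w q ∂μsq)
    (b0 b1 : ℝ × ℝ → ℝ)
    (hb0 : MemLp b0 2 μsq) (hb0sym : ∀ x y : ℝ, b0 (x, y) = b0 (y, x))
    (hb0r : ∀ᵐ z ∂μsq, r ≤ b0 z)
    (hb1 : MemLp b1 2 μsq) (hb1sym : ∀ x y : ℝ, b1 (x, y) = b1 (y, x))
    (hb1r : ∀ᵐ z ∂μsq, r ≤ b1 z)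
    (t : ℝ) (ht0 : 0 ≤ t) (ht1 : t ≤ 1)
    (p0 p1 pt : ℝ → ℝ)
    (hp0 : MemLp p0 2 μI) (hp00 : ∫ x, p0 x ∂μI = 0)
    (hp0sol : ∀ φ : ℝ → ℝ, MemLp φ ⊤ μI → (∫ x, φ x ∂μI) = 0 →
      (1 / 2) * ∫ q, b0 q * (p0 q.1 - p0 q.2) * (φ q.1 - φ q.2) * w q ∂μsq
        = ∫ x, σ x * φ x ∂μI)
    (hp1 : MemLp p1 2 μI) (hp10 : ∫ x, p1 x ∂μI = 0)
    (hp1sol : ∀ φ : ℝ → ℝ, MemLp φ ⊤ μI → (∫ x, φ x ∂μI) = 0 →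
      (1 / 2) * ∫ q, b1 q * (p1 q.1 - p1 q.2) * (φ q.1 - φ q.2) * w q ∂μsq
        = ∫ x, σ x * φ x ∂μI)
    (hpt : MemLp pt 2 μI) (hpt0 : ∫ x, pt x ∂μI = 0)
    (hptsol : ∀ φ : ℝ → ℝ, MemLp φ ⊤ μI → (∫ x, φ x ∂μI) = 0 →
      (1 / 2) * ∫ q, ((1 - t) * b0 q + t * b1 q) * (pt q.1 - pt q.2) * (φ q.1 - φ q.2)
          * w q ∂μsq
        = ∫ x, σ x * φ x ∂μI) :
    ∫ x, σ x * pt x ∂μI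
      ≤ (1 - t) * ∫ x, σ x * p0 x ∂μI + t * ∫ x, σ x * p1 x ∂μI :=
  kinetic_energy_convex_general r hr σ hσ hσ0 w hw0 hwb b0 b1 hb0 hb0r hb1 hb1r t ht0 ht1 p0 p1 pt
    hp0 hp0sol hp1 hp1sol hpt hptsol
end
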